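/- If α > 0 is such that f_s(·,α) equioscillates, i.e., there is M > 0 with max_{u∈[−1,1]} f_s(u,α) = M and min_{u∈[−1,1]} f_s(u,α) = −M, then α lies in the interval [1/2, 1/(2(1−a²))]. -/

import Mathlib

/-! Along the side `v = -1` the error is a polynomial in `w = 1 - u² ∈ [0, 1]`: with `D = 1 - a²`,
`f_s = w (2Dα - 1) + D w² (α - 1/2)² = w (D (α + 1/2)² - 1) - D w (1 - w) (α - 1/2)²`.
The first form is `≥ 0` when `2Dα ≥ 1`, the second is `≤ 0` when `0 < α ≤ 1/2`; in either case
`f_s` cannot take both signs on `[-1, 1]`, as equioscillation with `M > 0` requires. -/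

noncomputable section

open Real Set

/-- A vector in Euclidean 3-space. -/
def v3 (x y z : ℝ) : EuclideanSpace ℝ (Fin 3) := WithLp.toLp 2 ![x, y, z]

/-- Quadratic Bernstein polynomials (parametrized on `[-1,1]`). -/
def bern (i : Fin 3) (u : ℝ) : ℝ :=
  (Nat.choose 2 (i : ℕ)) * ((1 + u) / 2) ^ (i : ℕ) * ((1 - u) / 2) ^ (2 - (i : ℕ))

/-- Control points `ctrl a α β i j = b i j` of the tensor product quadratic Bézier patch:
`b₀₀ = (-a,-a,√(1-2a²))`, `b₂₀ = (a,-a,√(1-2a²))`, `b₀₂ = (-a,a,√(1-2a²))`,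
`b₂₂ = (a,a,√(1-2a²))`, `b₁₀ = α(b₀₀+b₂₀)`, `b₀₁ = α(b₀₀+b₀₂)`, `b₂₁ = α(b₂₀+b₂₂)`,
`b₁₂ = α(b₀₂+b₂₂)`, `b₁₁ = β(0,0,1)`. The first index is the `u`-index. -/
def ctrl (a α β : ℝ) : Fin 3 → Fin 3 → EuclideanSpace ℝ (Fin 3) :=
  ![![v3 (-a) (-a) (Real.sqrt (1 - 2*a^2)),
     α • (v3 (-a) (-a) (Real.sqrt (1 - 2*a^2)) + v3 (-a) a (Real.sqrt (1 - 2*a^2))),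
     v3 (-a) a (Real.sqrt (1 - 2*a^2))],
    ![α • (v3 (-a) (-a) (Real.sqrt (1 - 2*a^2)) + v3 a (-a) (Real.sqrt (1 - 2*a^2))),
     β • v3 0 0 1,
     α • (v3 (-a) a (Real.sqrt (1 - 2*a^2)) + v3 a a (Real.sqrt (1 - 2*a^2)))],
    ![v3 a (-a) (Real.sqrt (1 - 2*a^2)),
     α • (v3 a (-a) (Real.sqrt (1 - 2*a^2)) + v3 a a (Real.sqrt (1 - 2*a^2))),
     v3 a a (Real.sqrt (1 - 2*a^2))]]

/-- The tensor product quadratic Bézier patch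
`p(u,v) = ∑ᵢ ∑ⱼ Bᵢ²(u) Bⱼ²(v) bᵢⱼ`. -/
def bez (a α β u v : ℝ) : EuclideanSpace ℝ (Fin 3) :=
  ∑ i : Fin 3, ∑ j : Fin 3, (bern i u * bern j v) • ctrl a α β i j

/-- The simplified radial error `f(u,v,α,β) = ‖p(u,v)‖² - 1`. -/
def f (a α β u v : ℝ) : ℝ := ‖bez a α β u v‖ ^ 2 - 1

/-- `f_s(u,α) = f(u,-1,α,β)`; this does not depend on `β` (the control point `b₁₁`
does not contribute on the side `v = -1`), so we take `β = 0`. -/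
def fs (a α u : ℝ) : ℝ := f a α 0 u (-1)

/-- `f_d(u,α,β) = f(u,u,α,β)`, the error along the diagonal. -/
def fd (a α β u : ℝ) : ℝ := f a α β u u

lemma v3_add (x y z x' y' z' : ℝ) :
    v3 x y z + v3 x' y' z' = v3 (x + x') (y + y') (z + z') := by
  ext k; fin_cases k <;> rfl

lemma smul_v3 (r x y z : ℝ) : r • v3 x y z = v3 (r * x) (r * y) (r * z) := by
  ext k; fin_cases k <;> rfl

lemma norm_v3_sq (x y z : ℝ) : ‖v3 x y z‖ ^ 2 = x ^ 2 + y ^ 2 + z ^ 2 := by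
  rw [EuclideanSpace.norm_eq, Real.sq_sqrt (by positivity)]
  simp [v3, Fin.sum_univ_three, sq_abs]

@[simp] lemma bern_zero_neg_one : bern 0 (-1) = 1 := by norm_num [bern]
@[simp] lemma bern_one_neg_one : bern 1 (-1) = 0 := by norm_num [bern]
@[simp] lemma bern_two_neg_one : bern 2 (-1) = 0 := by norm_num [bern]

lemma bern_zero_add_bern_two (u : ℝ) : bern 0 u + bern 2 u = (1 + u ^ 2) / 2 := by
  norm_num [bern]; ring

lemma bern_one_eq (u : ℝ) : bern 1 u = (1 - u ^ 2) / 2 := by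
  norm_num [bern]; ring

lemma bern_two_sub_bern_zero (u : ℝ) : bern 2 u - bern 0 u = u := by
  norm_num [bern]; ring

/-- On the side `v = -1` only the control points `b₀₀, b₁₀, b₂₀` contribute. -/
lemma bez_neg_one (a α β u : ℝ) :
    bez a α β u (-1) =
      v3 (a * (bern 2 u - bern 0 u))
        (-a * (bern 0 u + bern 2 u + 2 * α * bern 1 u))
        (√(1 - 2 * a ^ 2) * (bern 0 u + bern 2 u + 2 * α * bern 1 u)) := by
  simp only [bez, Fin.sum_univ_three, bern_zero_neg_one, bern_one_neg_one, bern_two_neg_one,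
    mul_one, mul_zero, zero_smul, add_zero, ctrl, Matrix.cons_val_zero, Matrix.cons_val_one,
    Matrix.cons_val_two, Matrix.head_cons, Matrix.tail_cons, v3_add, smul_v3]
  congr 1 <;> ring

lemma fs_eq (a α u : ℝ) (ha : 2 * a ^ 2 ≤ 1) :
    fs a α u = (1 - u ^ 2) * (2 * (1 - a ^ 2) * α - 1)
      + (1 - a ^ 2) * (1 - u ^ 2) ^ 2 * (α - 1 / 2) ^ 2 := by
  have hsqrt : √(1 - 2 * a ^ 2) ^ 2 = 1 - 2 * a ^ 2 := Real.sq_sqrt (by linarith)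
  rw [fs, f, bez_neg_one, norm_v3_sq, bern_zero_add_bern_two, bern_one_eq,
    bern_two_sub_bern_zero]
  linear_combination ((1 + u ^ 2) / 2 + 2 * α * ((1 - u ^ 2) / 2)) ^ 2 * hsqrt

lemma fs_nonneg {a α u : ℝ} (ha : 2 * a ^ 2 ≤ 1) (hα : 1 ≤ 2 * (1 - a ^ 2) * α)
    (hu : u ∈ Icc (-1 : ℝ) 1) : 0 ≤ fs a α u := by
  have hw : 0 ≤ 1 - u ^ 2 := by nlinarith [hu.1, hu.2]
  have hD : 0 ≤ 1 - a ^ 2 := by linarith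
  rw [fs_eq a α u ha]
  exact add_nonneg (mul_nonneg hw (sub_nonneg.2 hα)) (by positivity)

lemma fs_nonpos {a α u : ℝ} (ha : 2 * a ^ 2 ≤ 1) (hα : (1 - a ^ 2) * (α + 1 / 2) ^ 2 ≤ 1)
    (hu : u ∈ Icc (-1 : ℝ) 1) : fs a α u ≤ 0 := by
  have hw : 0 ≤ 1 - u ^ 2 := by nlinarith [hu.1, hu.2]
  have hD : 0 ≤ 1 - a ^ 2 := by linarith
  have hfs : fs a α u = (1 - u ^ 2) * ((1 - a ^ 2) * (α + 1 / 2) ^ 2 - 1)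
      - (1 - a ^ 2) * (1 - u ^ 2) * u ^ 2 * (α - 1 / 2) ^ 2 := by
    rw [fs_eq a α u ha]; ring
  rw [hfs]
  exact sub_nonpos_of_le ((mul_nonpos_of_nonneg_of_nonpos hw (sub_nonpos.2 hα)).trans
    (by positivity))

/-- If `α > 0` is such that `f_s(·,α)` equioscillates, i.e. there is `M > 0` with
`max_{[-1,1]} f_s(·,α) = M` and `min_{[-1,1]} f_s(·,α) = -M`, then
`α ∈ [1/2, 1/(2(1-a²))]`. -/
theorem equioscillation_interval (a : ℝ) (ha : 0 < a) (ha' : a ≤ Real.sqrt 2 / 2)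
    (α : ℝ) (hα : 0 < α)
    (h : ∃ M : ℝ, 0 < M ∧
      sSup ((fun u => fs a α u) '' Set.Icc (-1:ℝ) 1) = M ∧
      sInf ((fun u => fs a α u) '' Set.Icc (-1:ℝ) 1) = -M) :
    α ∈ Set.Icc (1/2 : ℝ) (1/(2*(1 - a^2))) := by
  obtain ⟨M, hM, hsup, hinf⟩ := h
  have ha2 : 2 * a ^ 2 ≤ 1 := by
    have := pow_le_pow_left₀ ha.le ha' 2
    rw [div_pow, Real.sq_sqrt zero_le_two] at this
    linarith
  have hne : ((fun u => fs a α u) '' Icc (-1 : ℝ) 1).Nonempty :=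
    (nonempty_Icc.2 (by norm_num)).image _
  obtain ⟨_, ⟨u, hu, rfl⟩, hpos⟩ := exists_lt_of_lt_csSup hne (hsup ▸ hM)
  obtain ⟨_, ⟨v, hv, rfl⟩, hneg⟩ := exists_lt_of_csInf_lt hne (hinf ▸ neg_neg_of_pos hM)
  constructor
  · by_contra! hα'
    refine (fs_nonpos ha2 ?_ hu).not_gt hpos
    exact mul_le_one₀ (by nlinarith [sq_nonneg a]) (by positivity) (by nlinarith)
  · by_contra! hα'
    rw [div_lt_iff₀ (by linarith)] at hα'
    exact (fs_nonneg ha2 (by linarith) hv).not_gt hneg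

end
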